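/- arXiv:2601.16311 — 7 statements merged into one kernel-verified Lean document; each statement's English description precedes it below -/
import Mathlib

section
/- Let ρ ∈ ℂ and let (a_k), (b_k) be sequences of complex numbers. Define T_0 = 0, T_1 = 1, T_{k+1} = (1+ρ)T_k − ρT_{k−1}, and q_0 = 0, q_1 = 1, q_{k+1} = (1+ρ+a_k)q_k − (ρ+b_k)q_{k−1}. Then for all k ≥ 2, q_k − T_k = Σ_{j=1}^{k−1} (a_j q_j − b_j q_{j−1}) T_{k−j}. -/
/-!
The difference `d = q - T` satisfies the recurrence of `T` with the forcing term
`a (k + 1) * q (k + 1) - b (k + 1) * q k` and vanishes at `0` and `1`. By the discrete Duhamel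
principle it is therefore the convolution of the forcing with the fundamental solution `T`.
-/

open Finset

section Duhamel

variable {R : Type*} [CommRing R] {c₁ c₀ : R} {T : ℕ → R}

theorem sum_Icc_mul_fundamental_succ_succ (hT0 : T 0 = 0) (hT1 : T 1 = 1)
    (hT : ∀ k, T (k + 2) = c₁ * T (k + 1) - c₀ * T k) (f : ℕ → R) (n : ℕ) :
    ∑ j ∈ Icc 1 (n + 1), f j * T (n + 2 - j) =
      c₁ * ∑ j ∈ Icc 1 n, f j * T (n + 1 - j) - c₀ * ∑ j ∈ Icc 1 (n - 1), f j * T (n - j)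
        + f (n + 1) := by
  have h_top : ∑ j ∈ Icc 1 n, f j * T (n - j) = ∑ j ∈ Icc 1 (n - 1), f j * T (n - j) := by
    rcases n with _ | m
    · rfl
    · rw [sum_Icc_succ_top (by omega), Nat.sub_self, hT0, mul_zero, add_zero, Nat.add_sub_cancel]
  have h_step : ∑ j ∈ Icc 1 n, f j * T (n + 2 - j) =
      c₁ * ∑ j ∈ Icc 1 n, f j * T (n + 1 - j) - c₀ * ∑ j ∈ Icc 1 n, f j * T (n - j) := by
    rw [mul_sum, mul_sum, ← sum_sub_distrib]
    refine sum_congr rfl fun j hj => ?_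
    have hjn : j ≤ n := (mem_Icc.mp hj).2
    rw [show n + 2 - j = n - j + 2 by omega, show n + 1 - j = n - j + 1 by omega, hT]
    ring
  rw [sum_Icc_succ_top (by omega), h_step, ← h_top, show n + 2 - (n + 1) = 1 by omega, hT1,
    mul_one]

theorem eq_sum_Icc_mul_fundamental (hT0 : T 0 = 0) (hT1 : T 1 = 1)
    (hT : ∀ k, T (k + 2) = c₁ * T (k + 1) - c₀ * T k) {d f : ℕ → R} (hd0 : d 0 = 0)
    (hd1 : d 1 = 0) (hd : ∀ k, d (k + 2) = c₁ * d (k + 1) - c₀ * d k + f (k + 1)) (k : ℕ) :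
    d k = ∑ j ∈ Icc 1 (k - 1), f j * T (k - j) := by
  induction k using Nat.twoStepInduction with
  | zero => simp [hd0]
  | one => simp [hd1]
  | more n ih₀ ih₁ =>
    rw [hd, ih₀, ih₁, Nat.add_sub_cancel, Nat.add_succ_sub_one,
      sum_Icc_mul_fundamental_succ_succ hT0 hT1 hT]

end Duhamel

theorem stmt_3 (ρ : ℂ) (a b : ℕ → ℂ) (T q : ℕ → ℂ)
    (hT0 : T 0 = 0) (hT1 : T 1 = 1)
    (hTrec : ∀ k, T (k + 2) = (1 + ρ) * T (k + 1) - ρ * T k)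
    (hq0 : q 0 = 0) (hq1 : q 1 = 1)
    (hqrec : ∀ k, q (k + 2) = (1 + ρ + a (k + 1)) * q (k + 1) - (ρ + b (k + 1)) * q k) :
    ∀ k, 2 ≤ k →
      q k - T k = ∑ j ∈ Finset.Icc 1 (k - 1), (a j * q j - b j * q (j - 1)) * T (k - j) := by
  intro k _
  refine eq_sum_Icc_mul_fundamental (d := fun k => q k - T k) hT0 hT1 hTrec
    (by simp [hq0, hT0]) (by simp [hq1, hT1]) (fun n => ?_) k
  simp only [hqrec, hTrec, Nat.add_sub_cancel]
  ring
end

section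
/- Let (ρ_k), (ε_k) be complex sequences and f_k(z) = ρ_k z/(1−z) + ε_k². Define q_0 = 0, q_1 = 1, r_0 = 1, r_1 = 1, with q_{k+1} = (1+ρ_k−ε_k²)q_k − ρ_k q_{k−1} and the same recurrence for r. Then the composition F_N = f_N ∘ ⋯ ∘ f_1 is the Möbius map F_N(z) = ((q_{N+1}−q_N)z + (r_N − r_{N+1}))/(−q_N z + r_N); equivalently, the product of the matrices M_k = [[ρ_k − ε_k², ε_k²],[−1, 1]] associated to f_k equals [[q_{N+1}−q_N, r_N−r_{N+1}],[−q_N, r_N]]. -/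
theorem stmt_6 (ρ ε : ℕ → ℂ) (q r : ℕ → ℂ)
    (hq0 : q 0 = 0) (hq1 : q 1 = 1)
    (hqrec : ∀ k, q (k + 2) = (1 + ρ (k + 1) - (ε (k + 1)) ^ 2) * q (k + 1) - ρ (k + 1) * q k)
    (hr0 : r 0 = 1) (hr1 : r 1 = 1)
    (hrrec : ∀ k, r (k + 2) = (1 + ρ (k + 1) - (ε (k + 1)) ^ 2) * r (k + 1) - ρ (k + 1) * r k)
    (P : ℕ → Matrix (Fin 2) (Fin 2) ℂ)
    (hP0 : P 0 = 1)
    (hPrec : ∀ k, P (k + 1) = !![ρ (k + 1) - (ε (k + 1)) ^ 2, (ε (k + 1)) ^ 2; -1, 1] * P k) :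
    ∀ N, 1 ≤ N → P N = !![q (N + 1) - q N, r N - r (N + 1); -(q N), r N] := by
  intro N hN
  induction N with
  | zero => omega
  | succ n ih =>
    rcases Nat.eq_zero_or_pos n with hn | hn
    · subst hn
      rw [hPrec 0, hP0, hqrec 0, hrrec 0, hq0, hq1, hr0, hr1]
      ext i j
      fin_cases i <;> fin_cases j <;>
        simp [Matrix.mul_apply, Fin.sum_univ_succ, Matrix.one_apply] <;> ring
    · rw [hPrec n, ih hn, hqrec n, hrrec n]
      ext i j
      fin_cases i <;> fin_cases j <;>
        simp [Matrix.mul_apply, Fin.sum_univ_succ] <;> ring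
end

section
/- Fix N and ρ = e^{2πi/N}. Suppose (a_k), (b_k) satisfy a_k = c_k/N² + E_{1,k}, b_k = c_k/N² + E_{2,k}, where |c_k| ≤ C and |E_{j,k}| ≤ C/N⁴ for a constant C independent of N and k. Define q_0 = 0, q_1 = 1, q_{k+1} = (1+ρ+a_k)q_k − (ρ+b_k)q_{k−1}. Then there exist constants C̃, C′ > 0 independent of N and k such that for all sufficiently large N and all 1 ≤ k ≤ N+1: |q_k − q_{k−1}| ≤ C̃, |q_k| ≤ 2N, and |q_k − T_k| ≤ C′, where T_k = (1−ρ^k)/(1−ρ). -/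
/-!
With `d k = q (k + 1) - q k` the recurrence reads `d (k + 1) = (ρ + a k) d k + (a k - b k) q k`.
As `‖ρ‖ = 1`, `a k = O(N⁻²)` and `a k - b k = O(N⁻⁴)`, over `N` steps this gives
`‖d k‖ ≤ (1 + O(N⁻²)) ^ k ≤ 3 / 2` and `‖q k‖ ≤ 3 k / 2`. Since `T k = ∑ j < k, ρ ^ j`, the
increments `g k = d k - ρ ^ k` of `q k - T k` satisfy `g (k + 1) = ρ g k + a k d k + (a k - b k) q k`
with a forcing of size `O(N⁻²)`, so `g k = O(k / N²)` and `q k - T k = O(k² / N²) = O(1)`.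
-/

open Finset

theorem one_add_pow_le_one_div_one_sub {δ : ℝ} {m : ℕ} (hδ : 0 ≤ δ) (h : m * δ < 1) :
    (1 + δ) ^ m ≤ 1 / (1 - m * δ) :=
  calc (1 + δ) ^ m ≤ Real.exp δ ^ m := by gcongr; linarith [Real.add_one_le_exp δ]
    _ = Real.exp (m * δ) := (Real.exp_nat_mul δ m).symm
    _ ≤ 1 / (1 - m * δ) := Real.exp_bound_div_one_sub_of_interval (by positivity) h

theorem le_add_mul_of_succ_le_add {u : ℕ → ℝ} {M : ℝ} {m : ℕ}
    (h : ∀ k < m, u (k + 1) ≤ u k + M) : u m ≤ u 0 + m * M := by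
  induction m with
  | zero => simp
  | succ m ih =>
    push_cast
    linarith [ih fun k hk => h k (by omega), h m (by omega)]

theorem norm_le_mul_of_eq_mul_add {R : Type*} [SeminormedRing R] {ρ : R} {x y : ℕ → R} {ε : ℝ}
    {m : ℕ} (hρ : ‖ρ‖ ≤ 1) (hx0 : x 0 = 0) (hx : ∀ k, x (k + 1) = ρ * x k + y k)
    (hy : ∀ k < m, ‖y k‖ ≤ ε) : ‖x m‖ ≤ m * ε := by
  have := le_add_mul_of_succ_le_add (u := fun k => ‖x k‖) (M := ε) (m := m) fun k hk =>
    calc ‖x (k + 1)‖ ≤ ‖ρ‖ * ‖x k‖ + ‖y k‖ := by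
          rw [hx]; exact (norm_add_le _ _).trans (add_le_add_left (norm_mul_le _ _) _)
      _ ≤ ‖x k‖ + ε := add_le_add (mul_le_of_le_one_left (norm_nonneg _) hρ) (hy k hk)
  simpa [hx0] using this

section PerturbedRecurrence

variable {R : Type*} {ρ : R} {a b q : ℕ → R}

theorem sub_succ_eq_of_recurrence [CommRing R]
    (hrec : ∀ k, q (k + 2) = (1 + ρ + a k) * q (k + 1) - (ρ + b k) * q k) (k : ℕ) :
    q (k + 2) - q (k + 1) = (ρ + a k) * (q (k + 1) - q k) + (a k - b k) * q k := by
  rw [hrec]; ring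

theorem sub_succ_sub_pow_eq_of_recurrence [CommRing R]
    (hrec : ∀ k, q (k + 2) = (1 + ρ + a k) * q (k + 1) - (ρ + b k) * q k) (k : ℕ) :
    q (k + 2) - q (k + 1) - ρ ^ (k + 1) =
      ρ * (q (k + 1) - q k - ρ ^ k) + (a k * (q (k + 1) - q k) + (a k - b k) * q k) := by
  rw [hrec]; ring

theorem norm_sub_le_and_norm_le_of_recurrence [SeminormedCommRing R] [NormOneClass R]
    {α β δ : ℝ} {n : ℕ} (hρ : ‖ρ‖ ≤ 1) (ha : ∀ k, ‖a k‖ ≤ α) (hab : ∀ k, ‖a k - b k‖ ≤ β)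
    (hδ : α + n * β ≤ δ) (hq0 : q 0 = 0) (hq1 : q 1 = 1)
    (hrec : ∀ k, q (k + 2) = (1 + ρ + a k) * q (k + 1) - (ρ + b k) * q k) :
    ∀ m ≤ n, ‖q (m + 1) - q m‖ ≤ (1 + δ) ^ m ∧ ‖q m‖ ≤ m * (1 + δ) ^ m := by
  have hα : 0 ≤ α := (norm_nonneg _).trans (ha 0)
  have hβ : 0 ≤ β := (norm_nonneg _).trans (hab 0)
  have hδ0 : 0 ≤ δ := by nlinarith [n.cast_nonneg (α := ℝ)]
  intro m hm
  induction m with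
  | zero => simp [hq0, hq1]
  | succ m ih =>
    obtain ⟨hd, hqm⟩ := ih (by omega)
    have hmn : (m : ℝ) * β ≤ n * β := by gcongr; exact_mod_cast (by omega : m ≤ n)
    constructor
    · calc ‖q (m + 2) - q (m + 1)‖
          = ‖(ρ + a m) * (q (m + 1) - q m) + (a m - b m) * q m‖ := by
            rw [sub_succ_eq_of_recurrence hrec]
        _ ≤ ‖ρ + a m‖ * ‖q (m + 1) - q m‖ + ‖a m - b m‖ * ‖q m‖ :=
            (norm_add_le _ _).trans (add_le_add (norm_mul_le _ _) (norm_mul_le _ _))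
        _ ≤ (1 + α) * (1 + δ) ^ m + β * (m * (1 + δ) ^ m) := by
            gcongr
            · exact (norm_add_le _ _).trans (add_le_add hρ (ha m))
            · exact hab m
        _ = (1 + (α + m * β)) * (1 + δ) ^ m := by ring
        _ ≤ (1 + δ) ^ (m + 1) := by rw [pow_succ']; gcongr; linarith
    · calc ‖q (m + 1)‖ ≤ ‖q m‖ + ‖q (m + 1) - q m‖ := norm_le_norm_add_norm_sub' _ _
        _ ≤ m * (1 + δ) ^ m + (1 + δ) ^ m := add_le_add hqm hd
        _ = (m + 1 : ℕ) * (1 + δ) ^ m := by push_cast; ring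
        _ ≤ (m + 1 : ℕ) * (1 + δ) ^ (m + 1) := by gcongr <;> linarith

theorem norm_sub_geom_sum_le_of_recurrence [SeminormedCommRing R] [NormOneClass R]
    {α β D : ℝ} {n m : ℕ} (hρ : ‖ρ‖ ≤ 1) (ha : ∀ k, ‖a k‖ ≤ α) (hab : ∀ k, ‖a k - b k‖ ≤ β)
    (hq0 : q 0 = 0) (hq1 : q 1 = 1)
    (hrec : ∀ k, q (k + 2) = (1 + ρ + a k) * q (k + 1) - (ρ + b k) * q k)
    (hstep : ∀ j ≤ n, ‖q (j + 1) - q j‖ ≤ D) (hq : ∀ j ≤ n, ‖q j‖ ≤ j * D) (hm : m ≤ n + 1) :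
    ‖q m - ∑ j ∈ range m, ρ ^ j‖ ≤ m ^ 2 * ((α + n * β) * D) := by
  have hα : 0 ≤ α := (norm_nonneg _).trans (ha 0)
  have hβ : 0 ≤ β := (norm_nonneg _).trans (hab 0)
  have hD : 0 ≤ D := (norm_nonneg _).trans (hstep 0 n.zero_le)
  set x : ℕ → R := fun j => q (j + 1) - q j - ρ ^ j
  have hx : ∀ j < m, ‖x j‖ ≤ j * ((α + n * β) * D) := fun j hj =>
    norm_le_mul_of_eq_mul_add hρ (by simp [x, hq0, hq1]) (sub_succ_sub_pow_eq_of_recurrence hrec)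
      fun k hk => by
        have hkn : (k : ℝ) * β ≤ n * β := by gcongr; exact_mod_cast (by omega : k ≤ n)
        calc ‖a k * (q (k + 1) - q k) + (a k - b k) * q k‖
            ≤ ‖a k‖ * ‖q (k + 1) - q k‖ + ‖a k - b k‖ * ‖q k‖ :=
              (norm_add_le _ _).trans (add_le_add (norm_mul_le _ _) (norm_mul_le _ _))
          _ ≤ α * D + β * (k * D) := by
              gcongr
              exacts [ha k, hstep k (by omega), hab k, hq k (by omega)]
          _ ≤ (α + n * β) * D := by nlinarith
  have he := le_add_mul_of_succ_le_add (u := fun j => ‖q j - ∑ i ∈ range j, ρ ^ i‖)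
    (M := m * ((α + n * β) * D)) (m := m) fun j hj =>
      calc ‖q (j + 1) - ∑ i ∈ range (j + 1), ρ ^ i‖ = ‖(q j - ∑ i ∈ range j, ρ ^ i) + x j‖ := by
            rw [sum_range_succ]; congr 1; ring
        _ ≤ ‖q j - ∑ i ∈ range j, ρ ^ i‖ + j * ((α + n * β) * D) :=
            (norm_add_le _ _).trans (by gcongr; exact hx j hj)
        _ ≤ ‖q j - ∑ i ∈ range j, ρ ^ i‖ + m * ((α + n * β) * D) := by
            gcongr
  simpa [hq0, sq, mul_assoc] using he

theorem norm_estimates_of_recurrence [SeminormedCommRing R] [NormOneClass R]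
    {α β δ : ℝ} {n m : ℕ} (hρ : ‖ρ‖ ≤ 1) (ha : ∀ k, ‖a k‖ ≤ α) (hab : ∀ k, ‖a k - b k‖ ≤ β)
    (hδ : α + n * β ≤ δ) (hnδ : n * δ ≤ 1 / 3) (hq0 : q 0 = 0) (hq1 : q 1 = 1)
    (hrec : ∀ k, q (k + 2) = (1 + ρ + a k) * q (k + 1) - (ρ + b k) * q k) (hm : m ≤ n) :
    ‖q (m + 1) - q m‖ ≤ 3 / 2 ∧ ‖q (m + 1)‖ ≤ (m + 1) * (3 / 2) ∧
      ‖q (m + 1) - ∑ j ∈ range (m + 1), ρ ^ j‖ ≤ (m + 1) ^ 2 * (δ * (3 / 2)) := by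
  have hδ0 : 0 ≤ δ := by
    nlinarith [(norm_nonneg _).trans (ha 0), (norm_nonneg _).trans (hab 0), n.cast_nonneg (α := ℝ)]
  have growth := norm_sub_le_and_norm_le_of_recurrence hρ ha hab hδ hq0 hq1 hrec
  have hpow : ∀ j ≤ n, (1 + δ) ^ j ≤ 3 / 2 := fun j hj => by
    have hjn : (j : ℝ) * δ ≤ n * δ := by gcongr
    refine (one_add_pow_le_one_div_one_sub hδ0 (by linarith)).trans ?_
    rw [div_le_iff₀ (by linarith)]
    linarith
  have hstep : ∀ j ≤ n, ‖q (j + 1) - q j‖ ≤ 3 / 2 := fun j hj => (growth j hj).1.trans (hpow j hj)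
  have hq : ∀ j ≤ n, ‖q j‖ ≤ j * (3 / 2) := fun j hj =>
    (growth j hj).2.trans (by gcongr; exact hpow j hj)
  refine ⟨hstep m hm, ?_, ?_⟩
  · calc ‖q (m + 1)‖ ≤ ‖q m‖ + ‖q (m + 1) - q m‖ := norm_le_norm_add_norm_sub' _ _
      _ ≤ m * (3 / 2) + 3 / 2 := add_le_add (hq m hm) (hstep m hm)
      _ = (m + 1) * (3 / 2) := by ring
  · refine (norm_sub_geom_sum_le_of_recurrence hρ ha hab hq0 hq1 hrec hstep hq
      (by omega : m + 1 ≤ n + 1)).trans ?_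
    push_cast
    gcongr

end PerturbedRecurrence

theorem stmt_11 (C : ℝ) (hC : 0 < C) :
    ∃ Ct C' : ℝ, 0 < Ct ∧ 0 < C' ∧ ∃ N₀ : ℕ, ∀ N : ℕ, N₀ ≤ N →
      ∀ ρ : ℂ, ρ = Complex.exp (2 * Real.pi * Complex.I / N) →
      ∀ a b c : ℕ → ℂ,
        (∀ k, ‖c k‖ ≤ C) →
        (∀ k, ‖a k - c k / (N : ℂ) ^ 2‖ ≤ C / (N : ℝ) ^ 4) →
        (∀ k, ‖b k - c k / (N : ℂ) ^ 2‖ ≤ C / (N : ℝ) ^ 4) →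
      ∀ q : ℕ → ℂ, q 0 = 0 → q 1 = 1 →
        (∀ k, q (k + 2) = (1 + ρ + a (k + 1)) * q (k + 1) - (ρ + b (k + 1)) * q k) →
      ∀ k, 1 ≤ k → k ≤ N + 1 →
        ‖q k - q (k - 1)‖ ≤ Ct ∧
        ‖q k‖ ≤ 2 * N ∧
        ‖q k - (1 - ρ ^ k) / (1 - ρ)‖ ≤ C' := by
  refine ⟨2, 24 * C, two_pos, by positivity, max 3 ⌈12 * C⌉₊, ?_⟩
  intro N hN ρ hρ a b c hc ha hb q hq0 hq1 hrec k hk1 hkN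
  obtain ⟨m, rfl⟩ : ∃ m, k = m + 1 := ⟨k - 1, by omega⟩
  have hN3 : (3 : ℝ) ≤ N := by exact_mod_cast le_of_max_le_left hN
  have hNC : 12 * C ≤ N := Nat.ceil_le.mp (le_of_max_le_right hN)
  have hmN : (m : ℝ) ≤ N := by exact_mod_cast (by omega : m ≤ N)
  have hζ : IsPrimitiveRoot ρ N := hρ ▸ Complex.isPrimitiveRoot_exp N (by omega)
  have hcN : ∀ k, ‖c k / (N : ℂ) ^ 2‖ ≤ C / (N : ℝ) ^ 2 := fun k => by
    rw [norm_div, norm_pow, Complex.norm_natCast]; gcongr; exact hc k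
  have hδ : C / (N : ℝ) ^ 2 + C / (N : ℝ) ^ 4 + N * (C / (N : ℝ) ^ 4 + C / (N : ℝ) ^ 4) ≤
      4 * C / (N : ℝ) ^ 2 := by
    have : (0 : ℝ) ≤ 3 * N ^ 2 - 2 * N - 1 := by nlinarith
    rw [← sub_nonneg]; field_simp; nlinarith
  have hNδ : N * (4 * C / (N : ℝ) ^ 2) ≤ 1 / 3 := by
    rw [← sub_nonneg]; field_simp; nlinarith
  obtain ⟨hstep, hq, he⟩ := norm_estimates_of_recurrence (a := fun k => a (k + 1))
    (b := fun k => b (k + 1)) (hζ.norm'_eq_one (by omega)).le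
    (fun k => (norm_le_norm_add_norm_sub' _ _).trans (add_le_add (hcN _) (ha _)))
    (fun k => (norm_sub_le_norm_sub_add_norm_sub _ _ _).trans
      (add_le_add (ha _) ((norm_sub_rev _ _).le.trans (hb _))))
    hδ hNδ hq0 hq1 hrec (by omega : m ≤ N)
  rw [← eq_div_of_mul_eq (sub_ne_zero.mpr (hζ.ne_one (by omega)).symm) (geom_sum_mul_neg ρ _)]
  have h2N : (m : ℝ) + 1 ≤ 2 * N := by linarith
  refine ⟨by simpa using hstep.trans (by norm_num), hq.trans (by linarith), he.trans ?_⟩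
  rw [← sub_nonneg]
  field_simp
  nlinarith [mul_self_le_mul_self (by positivity) h2N]
end

section
/- Fix N and ρ = e^{2πi/N}. Suppose a_k = c_k/N³ + e_k and b_k = c_k/N³ + e′_k with |c_k| ≤ C, |e_k|, |e′_k| ≤ C/N⁴ for a constant C independent of N, k. Define q_0 = 0, q_1 = 1, q_{k+1} = (1+ρ+a_k)q_k − (ρ+b_k)q_{k−1}. Then there is a constant C′ independent of N with |q_N| ≤ C′/N and |q_{N+1} − 1| ≤ C′/N. -/
/-!
Write `d k = q (k+1) - q k`. The recurrence says `d (k+1) = ρ d k + (a q (k+1) - b q k)`: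
a unimodular rotation of the increments plus a forcing term. Since `|ρ| = 1`, forcing terms of
size `ε` make `d k` drift from `ρ ^ k` by at most `k ε`, hence `q k` drift from the geometric sum
`T k = ∑_{j<k} ρ ^ j` by at most `k² ε`. A bootstrap keeps `|d k| ≤ 2` and `|q k| ≤ 2k` up to
`k = N`, so the forcing term is `O(1/N³)` (the `1/N³` parts of `a` and `b` agree and only see
`d k`, while the `1/N⁴` errors see `q k = O(N)`). Hence `q k = T k + O(1/N)` for `k ≤ N + 1`,
and `T N = 0`, `T (N+1) = 1`.
-/

open Finset

variable {R : Type*} [SeminormedRing R]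

lemma norm_mul_sub_mul_le (a b c x y : R) :
    ‖a * y - b * x‖ ≤ ‖c‖ * ‖y - x‖ + ‖a - c‖ * ‖y‖ + ‖b - c‖ * ‖x‖ := by
  calc ‖a * y - b * x‖ = ‖c * (y - x) + ((a - c) * y - (b - c) * x)‖ := by congr 1; noncomm_ring
    _ ≤ ‖c * (y - x)‖ + (‖(a - c) * y‖ + ‖(b - c) * x‖) :=
      (norm_add_le _ _).trans (by gcongr; exact norm_sub_le _ _)
    _ ≤ ‖c‖ * ‖y - x‖ + (‖a - c‖ * ‖y‖ + ‖b - c‖ * ‖x‖) := by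
      gcongr <;> exact norm_mul_le _ _
    _ = _ := by ring

/-- The forcing term `d (k+1) - ρ d k` of the increments. -/
def recDefect (ρ : R) (q : ℕ → R) (k : ℕ) : R :=
  q (k + 2) - q (k + 1) - ρ * (q (k + 1) - q k)

variable {ρ : R} {q : ℕ → R} {k : ℕ} {ε : ℝ}

lemma norm_sub_sub_pow_mul_le_of_recDefect (hρ : ‖ρ‖ ≤ 1) (hf : ∀ i < k, ‖recDefect ρ q i‖ ≤ ε) :
    ‖q (k + 1) - q k - ρ ^ k * (q 1 - q 0)‖ ≤ k * ε := by
  induction k with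
  | zero => simp
  | succ k ih =>
    have hstep : q (k + 1 + 1) - q (k + 1) - ρ ^ (k + 1) * (q 1 - q 0)
        = ρ * (q (k + 1) - q k - ρ ^ k * (q 1 - q 0)) + recDefect ρ q k := by
      simp only [recDefect, pow_succ']; noncomm_ring
    have ih := ih fun i hi => hf i (by omega)
    calc _ ≤ ‖ρ‖ * ‖q (k + 1) - q k - ρ ^ k * (q 1 - q 0)‖ + ‖recDefect ρ q k‖ := by
          rw [hstep]; exact (norm_add_le _ _).trans (by gcongr; exact norm_mul_le _ _)
      _ ≤ 1 * (k * ε) + ε := by gcongr; exact hf k (by omega)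
      _ = (k + 1 : ℕ) * ε := by push_cast; ring

lemma norm_sub_geom_sum_mul_le_of_recDefect (hρ : ‖ρ‖ ≤ 1) (hf : ∀ i < k, ‖recDefect ρ q i‖ ≤ ε)
    (hε : 0 ≤ ε) :
    ‖q k - q 0 - (∑ j ∈ range k, ρ ^ j) * (q 1 - q 0)‖ ≤ k ^ 2 * ε := by
  have htelescope : q k - q 0 - (∑ j ∈ range k, ρ ^ j) * (q 1 - q 0)
      = ∑ j ∈ range k, (q (j + 1) - q j - ρ ^ j * (q 1 - q 0)) := by
    rw [sum_sub_distrib, sum_range_sub, sum_mul]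
  rw [htelescope]
  calc _ ≤ ∑ j ∈ range k, (k * ε : ℝ) := by
        refine norm_sum_le_of_le _ fun j hj => ?_
        have hjk := mem_range.mp hj
        refine (norm_sub_sub_pow_mul_le_of_recDefect hρ fun i hi => hf i (hi.trans hjk)).trans ?_
        gcongr
    _ = k ^ 2 * ε := by rw [sum_const, card_range, nsmul_eq_mul]; ring

lemma norm_sub_le_two_of_recDefect [NormOneClass R] (hρ : ‖ρ‖ ≤ 1) (h0 : q 0 = 0) (h1 : q 1 = 1)
    (hf : ∀ i < k, ‖recDefect ρ q i‖ ≤ ε) (hkε : k * ε ≤ 1) : ‖q (k + 1) - q k‖ ≤ 2 := by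
  have hdrift := norm_sub_sub_pow_mul_le_of_recDefect hρ hf
  rw [h0, h1, sub_zero, mul_one] at hdrift
  have hpow : ‖ρ ^ k‖ ≤ 1 := (norm_pow_le _ _).trans (pow_le_one₀ (norm_nonneg _) hρ)
  calc _ ≤ ‖ρ ^ k‖ + ‖q (k + 1) - q k - ρ ^ k‖ := norm_le_norm_add_norm_sub' _ _
    _ ≤ 1 + 1 := add_le_add hpow (hdrift.trans hkε)
    _ = 2 := by norm_num

lemma norm_le_two_mul_of_recDefect [NormOneClass R] (hρ : ‖ρ‖ ≤ 1) (h0 : q 0 = 0) (h1 : q 1 = 1)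
    (hf : ∀ i < k, ‖recDefect ρ q i‖ ≤ ε) (hkε : k * ε ≤ 1) (hε : 0 ≤ ε) : ‖q k‖ ≤ 2 * k := by
  have hdrift := norm_sub_geom_sum_mul_le_of_recDefect hρ hf hε
  rw [h0, h1, sub_zero, sub_zero, mul_one] at hdrift
  have hgeom : ‖∑ j ∈ range k, ρ ^ j‖ ≤ k := by
    calc _ ≤ ∑ _j ∈ range k, (1 : ℝ) := norm_sum_le_of_le _ fun j _ =>
          (norm_pow_le _ _).trans (pow_le_one₀ (norm_nonneg _) hρ)
      _ = k := by simp
  have hk2 : (k : ℝ) ^ 2 * ε ≤ k := by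
    calc (k : ℝ) ^ 2 * ε = k * (k * ε) := by ring
      _ ≤ k * 1 := by gcongr
      _ = k := mul_one _
  calc _ ≤ ‖∑ j ∈ range k, ρ ^ j‖ + ‖q k - ∑ j ∈ range k, ρ ^ j‖ :=
        norm_le_norm_add_norm_sub' _ _
    _ ≤ k + k := add_le_add hgeom (hdrift.trans hk2)
    _ = 2 * k := by ring

lemma norm_recDefect_le_of_near [NormOneClass R] {a b c : ℕ → R} {β γ : ℝ} {n : ℕ}
    (hρ : ‖ρ‖ ≤ 1) (h0 : q 0 = 0) (h1 : q 1 = 1)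
    (hrec : ∀ k, recDefect ρ q k = a k * q (k + 1) - b k * q k)
    (hc : ∀ k, ‖c k‖ ≤ β) (ha : ∀ k, ‖a k - c k‖ ≤ γ) (hb : ∀ k, ‖b k - c k‖ ≤ γ)
    (hε : 2 * β + (4 * n + 2) * γ ≤ ε) (hnε : n * ε ≤ 1) :
    ∀ k ≤ n, ‖recDefect ρ q k‖ ≤ ε := by
  have hβ : 0 ≤ β := (norm_nonneg _).trans (hc 0)
  have hγ : 0 ≤ γ := (norm_nonneg _).trans (ha 0)
  have hε0 : 0 ≤ ε := le_trans (by positivity) hε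
  intro k
  induction k using Nat.strong_induction_on with
  | _ k ih =>
    intro hkn
    have hf : ∀ i < k, ‖recDefect ρ q i‖ ≤ ε := fun i hi => ih i hi (by omega)
    have hkn' : (k : ℝ) ≤ n := by exact_mod_cast hkn
    have hkε : k * ε ≤ 1 := le_trans (by gcongr) hnε
    have hd := norm_sub_le_two_of_recDefect hρ h0 h1 hf hkε
    have hq := norm_le_two_mul_of_recDefect hρ h0 h1 hf hkε hε0
    have hq' : ‖q (k + 1)‖ ≤ 2 * k + 2 :=
      (norm_le_norm_add_norm_sub' _ (q k)).trans (add_le_add hq hd)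
    rw [hrec]
    calc _ ≤ ‖c k‖ * ‖q (k + 1) - q k‖ + ‖a k - c k‖ * ‖q (k + 1)‖ + ‖b k - c k‖ * ‖q k‖ :=
          norm_mul_sub_mul_le _ _ _ _ _
      _ ≤ β * 2 + γ * (2 * k + 2) + γ * (2 * k) := by gcongr; exacts [hc k, ha k, hb k]
      _ = 2 * β + (4 * k + 2) * γ := by ring
      _ ≤ ε := le_trans (by gcongr) hε

theorem stmt_12 (C : ℝ) (hC : 0 < C) :
    ∃ C' : ℝ, 0 < C' ∧ ∃ N₀ : ℕ, ∀ N : ℕ, N₀ ≤ N →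
      ∀ ρ : ℂ, ρ = Complex.exp (2 * Real.pi * Complex.I / N) →
      ∀ a b c : ℕ → ℂ,
        (∀ k, ‖c k‖ ≤ C) →
        (∀ k, ‖a k - c k / (N : ℂ) ^ 3‖ ≤ C / (N : ℝ) ^ 4) →
        (∀ k, ‖b k - c k / (N : ℂ) ^ 3‖ ≤ C / (N : ℝ) ^ 4) →
      ∀ q : ℕ → ℂ, q 0 = 0 → q 1 = 1 →
        (∀ k, q (k + 2) = (1 + ρ + a (k + 1)) * q (k + 1) - (ρ + b (k + 1)) * q k) →
        ‖q N‖ ≤ C' / N ∧ ‖q (N + 1) - 1‖ ≤ C' / N := by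
  refine ⟨32 * C, by positivity, ⌈8 * C⌉₊ + 2, ?_⟩
  intro N hN ρ hρ a b c hc ha hb q hq0 hq1 hq
  have hN8C : 8 * C ≤ N := (Nat.le_ceil _).trans (by exact_mod_cast (by omega : ⌈8 * C⌉₊ ≤ N))
  have hN1 : (1 : ℝ) ≤ N := by exact_mod_cast (by omega : 1 ≤ N)
  have hζ : IsPrimitiveRoot ρ N := hρ ▸ Complex.isPrimitiveRoot_exp N (by omega)
  have hρ1 : ‖ρ‖ ≤ 1 := (Complex.norm_eq_one_of_pow_eq_one hζ.pow_eq_one (by omega)).le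
  have hdefect : ∀ k ≤ N, ‖recDefect ρ q k‖ ≤ 8 * C / N ^ 3 :=
    norm_recDefect_le_of_near (a := fun k => a (k + 1)) (b := fun k => b (k + 1))
      (c := fun k => c (k + 1) / N ^ 3) (β := C / N ^ 3) (γ := C / N ^ 4) hρ1 hq0 hq1
      (fun k => by simp only [recDefect, hq k]; ring)
      (fun k => by rw [norm_div, norm_pow, Complex.norm_natCast]; gcongr; exact hc _)
      (fun _ => ha _) (fun _ => hb _) (by field_simp; nlinarith) (by field_simp; nlinarith)
  have hT0 : ∑ j ∈ range N, ρ ^ j = 0 := hζ.geom_sum_eq_zero (by omega)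
  have hT1 : ∑ j ∈ range (N + 1), ρ ^ j = 1 := by
    rw [sum_range_succ, hT0, hζ.pow_eq_one, zero_add]
  have hqN := norm_sub_geom_sum_mul_le_of_recDefect hρ1 (fun i hi => hdefect i hi.le)
    (by positivity)
  have hqN1 := norm_sub_geom_sum_mul_le_of_recDefect (k := N + 1) hρ1
    (fun i hi => hdefect i (by omega)) (by positivity)
  simp only [hT0, hT1, hq0, hq1, sub_zero, zero_mul, one_mul, Nat.cast_succ] at hqN hqN1
  constructor
  · exact hqN.trans (by field_simp; nlinarith)
  · exact hqN1.trans (by field_simp; nlinarith)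
end

section
/- Let N = 2m be even, s = e^{2πi/(N−1)}, t = e^{2πi/(N+1)}. Define q_N = (s^m − 1)/(s − 1) + s^m (t^m − 1)/(t − 1). Then q_N = −2i/π + O(1/N); in particular there exists N₀ such that |q_N| ≥ 1/π for all even N ≥ N₀. -/
/-!
Put `a = πi/(N-1)` and `b = πi/(N+1)`, so that `s = e^{2a}`, `t = e^{2b}`, and, because
`(N-1)a = (N+1)b = πi`, also `s^m = -e^a` and `t^m = -e^{-b}`. Then
`q_N = -1/(e^a - 1) + e^{a-b}/(e^b - 1)`. Inserting `1/(e^z - 1) = 1/z - 1/2 + O(z)`, the two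
constants `-1/2` cancel up to `e^{a-b} - 1 = O(1/N^2)`, which is multiplied by `1/(e^b - 1) = O(N)`,
and the leading terms give `-1/a + 1/b = -2i/π` exactly.
-/

open Complex Real

namespace Complex

lemma norm_exp_sub_one_sub_id_sub_sq_div_two_le {z : ℂ} (hz : ‖z‖ ≤ 1) :
    ‖exp z - 1 - z - z ^ 2 / 2‖ ≤ ‖z‖ ^ 3 := by
  have h := exp_bound hz (n := 3) (by norm_num)
  simp only [Finset.sum_range_succ, Finset.sum_range_zero] at h
  norm_num [Nat.factorial] at h
  calc ‖exp z - 1 - z - z ^ 2 / 2‖ = ‖exp z - (1 + z + z ^ 2 / 2)‖ := by ring_nf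
    _ ≤ ‖z‖ ^ 3 * (2 / 9) := h
    _ ≤ ‖z‖ ^ 3 := by nlinarith [pow_nonneg (norm_nonneg z) 3]

lemma half_norm_le_norm_exp_sub_one {z : ℂ} (hz : ‖z‖ ≤ 1 / 2) :
    ‖z‖ / 2 ≤ ‖exp z - 1‖ := by
  have hquad := norm_exp_sub_one_sub_id_le (hz.trans (by norm_num))
  have htri := norm_sub_norm_le z (exp z - 1)
  rw [norm_sub_rev z] at htri
  nlinarith [norm_nonneg z]

lemma exp_sub_one_ne_zero_of_norm_le {z : ℂ} (hz : ‖z‖ ≤ 1 / 2) (hz0 : z ≠ 0) :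
    exp z - 1 ≠ 0 :=
  norm_pos_iff.1 <| (half_pos (norm_pos_iff.2 hz0)).trans_le (half_norm_le_norm_exp_sub_one hz)

lemma exp_add_one_ne_zero_of_norm_lt {z : ℂ} (hz : ‖z‖ < 1) : exp z + 1 ≠ 0 := by
  intro h
  have := norm_exp_sub_one_le hz.le
  rw [eq_neg_of_add_eq_zero_left h] at this
  norm_num at this
  linarith

lemma norm_inv_exp_sub_one_le {z : ℂ} (hz : ‖z‖ ≤ 1 / 2) (hz0 : z ≠ 0) :
    ‖(exp z - 1)⁻¹‖ ≤ 2 / ‖z‖ := by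
  rw [norm_inv, ← inv_div]
  exact inv_anti₀ (half_pos (norm_pos_iff.2 hz0)) (half_norm_le_norm_exp_sub_one hz)

lemma norm_inv_exp_sub_one_sub_inv_add_half_le {z : ℂ} (hz : ‖z‖ ≤ 1 / 2) (hz0 : z ≠ 0) :
    ‖(exp z - 1)⁻¹ - z⁻¹ + 1 / 2‖ ≤ 3 * ‖z‖ := by
  set r := exp z - 1 - z - z ^ 2 / 2 with hr_def
  have hr : ‖r‖ ≤ ‖z‖ ^ 3 := norm_exp_sub_one_sub_id_sub_sq_div_two_le (hz.trans (by norm_num))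
  have hE := half_norm_le_norm_exp_sub_one hz
  have hE0 := exp_sub_one_ne_zero_of_norm_le hz hz0
  have hz_pos := norm_pos_iff.2 hz0
  have hid : (exp z - 1)⁻¹ - z⁻¹ + 1 / 2 = (z ^ 3 / 2 + (z - 2) * r) / (2 * z * (exp z - 1)) := by
    rw [hr_def]; field_simp; ring
  have hnum : ‖z ^ 3 / 2 + (z - 2) * r‖ ≤ ‖z‖ ^ 3 / 2 + (‖z‖ + 2) * ‖z‖ ^ 3 := by
    refine (norm_add_le _ _).trans ?_
    rw [norm_mul, norm_div, norm_pow, RCLike.norm_ofNat]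
    gcongr
    exact (norm_sub_le _ _).trans_eq (by rw [RCLike.norm_ofNat])
  rw [hid, norm_div, div_le_iff₀ (norm_pos_iff.2 (by simp [hz0, hE0])), norm_mul, norm_mul,
    RCLike.norm_ofNat]
  calc _ ≤ ‖z‖ ^ 3 / 2 + (‖z‖ + 2) * ‖z‖ ^ 3 := hnum
    _ ≤ 3 * ‖z‖ * (‖z‖ * ‖z‖) := by nlinarith [pow_pos hz_pos 3]
    _ ≤ 3 * ‖z‖ * (2 * ‖z‖ * ‖exp z - 1‖) := by
      have := mul_pos hz_pos hz_pos
      nlinarith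

lemma norm_neg_inv_exp_sub_one_add_exp_sub_mul_sub_le {a b : ℂ} (ha : ‖a‖ ≤ 1 / 2)
    (hb : ‖b‖ ≤ 1 / 2) (ha0 : a ≠ 0) (hb0 : b ≠ 0) :
    ‖(-(exp a - 1)⁻¹ + exp (a - b) * (exp b - 1)⁻¹) - (-a⁻¹ + b⁻¹)‖ ≤
      3 * ‖a‖ + 3 * ‖b‖ + 4 * (‖a - b‖ / ‖b‖) := by
  have hab : ‖a - b‖ ≤ 1 := (norm_sub_le a b).trans (by linarith)
  rw [show -(exp a - 1)⁻¹ + exp (a - b) * (exp b - 1)⁻¹ - (-a⁻¹ + b⁻¹) =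
      ((exp b - 1)⁻¹ - b⁻¹ + 1 / 2) - ((exp a - 1)⁻¹ - a⁻¹ + 1 / 2)
        + (exp (a - b) - 1) * (exp b - 1)⁻¹ by ring]
  calc _ ≤ ‖(exp b - 1)⁻¹ - b⁻¹ + 1 / 2‖ + ‖(exp a - 1)⁻¹ - a⁻¹ + 1 / 2‖ +
        ‖exp (a - b) - 1‖ * ‖(exp b - 1)⁻¹‖ := by
        rw [← norm_mul]
        exact (norm_add_le _ _).trans (by gcongr; exact norm_sub_le _ _)
    _ ≤ 3 * ‖b‖ + 3 * ‖a‖ + 2 * ‖a - b‖ * (2 / ‖b‖) := by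
      gcongr
      · exact norm_inv_exp_sub_one_sub_inv_add_half_le hb hb0
      · exact norm_inv_exp_sub_one_sub_inv_add_half_le ha ha0
      · exact norm_exp_sub_one_le hab
      · exact norm_inv_exp_sub_one_le hb hb0
    _ = _ := by ring

lemma exp_two_mul_pow_eq_neg_exp {w d : ℂ} {k : ℕ} (h : (2 * k - d) * w = π * I) :
    exp (2 * w) ^ k = -exp (d * w) := by
  rw [← exp_nat_mul, show (k : ℂ) * (2 * w) = π * I + d * w by linear_combination h, exp_add,
    exp_pi_mul_I, neg_one_mul]

lemma neg_sub_one_div_sq_sub_one {u : ℂ} (hu : u + 1 ≠ 0) :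
    (-u - 1) / (u ^ 2 - 1) = -(u - 1)⁻¹ := by
  rw [show u ^ 2 - 1 = (u + 1) * (u - 1) by ring, show -u - 1 = -(u + 1) by ring, neg_div,
    div_mul_eq_div_div, div_self hu, one_div]

lemma neg_inv_sub_one_div_sq_sub_one {v : ℂ} (hv0 : v ≠ 0) (hv : v + 1 ≠ 0) :
    (-v⁻¹ - 1) / (v ^ 2 - 1) = -(v⁻¹ * (v - 1)⁻¹) := by
  rw [show -v⁻¹ - 1 = v⁻¹ * (-v - 1) by field_simp; ring, mul_div_assoc,
    neg_sub_one_div_sq_sub_one hv, mul_neg]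

lemma exp_two_mul_pow_sub_one_div_add_eq {a b : ℂ} {m : ℕ} (hma : (2 * m - 1) * a = π * I)
    (hmb : (2 * m + 1) * b = π * I) (ha : ‖a‖ < 1) (hb : ‖b‖ < 1) :
    (exp (2 * a) ^ m - 1) / (exp (2 * a) - 1) +
        exp (2 * a) ^ m * ((exp (2 * b) ^ m - 1) / (exp (2 * b) - 1)) =
      -(exp a - 1)⁻¹ + exp (a - b) * (exp b - 1)⁻¹ := by
  have hsq (z : ℂ) : exp (2 * z) = exp z ^ 2 := by rw [← exp_nat_mul]; norm_num
  rw [exp_two_mul_pow_eq_neg_exp (d := 1) hma,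
    exp_two_mul_pow_eq_neg_exp (d := -1) (by rw [sub_neg_eq_add]; exact hmb), hsq, hsq, one_mul,
    neg_one_mul, exp_neg, neg_sub_one_div_sq_sub_one (exp_add_one_ne_zero_of_norm_lt ha),
    neg_inv_sub_one_div_sq_sub_one (exp_ne_zero b) (exp_add_one_ne_zero_of_norm_lt hb), exp_sub]
  ring

lemma norm_ofReal_mul_I_of_nonneg {r : ℝ} (hr : 0 ≤ r) : ‖(r : ℂ) * I‖ = r := by
  rw [norm_mul, norm_I, mul_one, norm_real, Real.norm_of_nonneg hr]

lemma neg_inv_add_inv_eq {x : ℝ} (hx₁ : x - 1 ≠ 0) (hx₂ : x + 1 ≠ 0) :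
    -(((π / (x - 1) : ℝ) : ℂ) * I)⁻¹ + (((π / (x + 1) : ℝ) : ℂ) * I)⁻¹ = -(2 * I) / π := by
  have hx₁' : (x : ℂ) - 1 ≠ 0 := by exact_mod_cast hx₁
  have hx₂' : (x : ℂ) + 1 ≠ 0 := by exact_mod_cast hx₂
  push_cast
  field_simp
  rw [I_sq]
  ring

end Complex

lemma norm_geom_quotient_sum_sub_le {m : ℕ} {x : ℝ} (hxm : x = 2 * m) (hx : 9 ≤ x) {a b : ℂ}
    (ha : a = (π / (x - 1) : ℝ) * I) (hb : b = (π / (x + 1) : ℝ) * I) :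
    ‖(exp (2 * a) ^ m - 1) / (exp (2 * a) - 1) +
        exp (2 * a) ^ m * ((exp (2 * b) ^ m - 1) / (exp (2 * b) - 1)) - (-(2 * I) / π)‖ ≤
      64 / x := by
  have hπ := pi_pos
  have hπ4 := pi_lt_four
  have hx₁ : 0 < x - 1 := by linarith
  have hx₂ : 0 < x + 1 := by linarith
  have hb_pos : 0 < π / (x + 1) := by positivity
  have hb_lt_a : π / (x + 1) < π / (x - 1) := by gcongr; linarith
  have ha_le : π / (x - 1) ≤ 1 / 2 := by rw [div_le_iff₀ hx₁]; linarith
  have ha_norm : ‖a‖ = π / (x - 1) := ha ▸ norm_ofReal_mul_I_of_nonneg (hb_pos.trans hb_lt_a).le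
  have hb_norm : ‖b‖ = π / (x + 1) := hb ▸ norm_ofReal_mul_I_of_nonneg hb_pos.le
  have hab : ‖a - b‖ / ‖b‖ = 2 / (x - 1) := by
    rw [hb_norm, ha, hb, ← sub_mul, ← ofReal_sub,
      norm_ofReal_mul_I_of_nonneg (sub_pos.2 hb_lt_a).le]
    field_simp
    ring
  have hma : (2 * m - 1) * a = π * I := by
    have := ofReal_ne_zero.2 hx₁.ne'
    push_cast [hxm] at this
    rw [ha, hxm]; push_cast; field_simp
  have hmb : (2 * m + 1) * b = π * I := by
    have := ofReal_ne_zero.2 hx₂.ne'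
    push_cast [hxm] at this
    rw [hb, hxm]; push_cast; field_simp
  rw [exp_two_mul_pow_sub_one_div_add_eq hma hmb (by linarith) (by linarith),
    ← neg_inv_add_inv_eq hx₁.ne' hx₂.ne', ← ha, ← hb]
  refine (norm_neg_inv_exp_sub_one_add_exp_sub_mul_sub_le (ha_norm ▸ ha_le)
    (hb_norm ▸ hb_lt_a.le.trans ha_le) (norm_pos_iff.1 (by linarith))
    (norm_pos_iff.1 (by linarith))).trans ?_
  rw [hab, ha_norm, hb_norm]
  calc _ ≤ 6 * (π / (x - 1)) + 4 * (2 / (x - 1)) := by linarith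
    _ = (6 * π + 8) / (x - 1) := by ring
    _ ≤ 32 / (x - 1) := by gcongr; linarith
    _ ≤ 64 / x := by rw [div_le_div_iff₀ hx₁ (by linarith)]; linarith

theorem stmt_13 :
    ∃ K : ℝ, 0 < K ∧ ∃ N₀ : ℕ, ∀ m : ℕ, 1 ≤ m → N₀ ≤ 2 * m →
      ∀ N : ℕ, N = 2 * m →
      ∀ s t qN : ℂ,
        s = Complex.exp (2 * Real.pi * Complex.I / (N - 1 : ℕ)) →
        t = Complex.exp (2 * Real.pi * Complex.I / (N + 1 : ℕ)) →
        qN = (s ^ m - 1) / (s - 1) + s ^ m * ((t ^ m - 1) / (t - 1)) →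
        ‖qN - (-(2 * Complex.I) / Real.pi)‖ ≤ K / N ∧
        1 / Real.pi ≤ ‖qN‖ := by
  refine ⟨64, by norm_num, 256, ?_⟩
  rintro m - hm N rfl s t qN rfl rfl hq
  have hm' : (256 : ℝ) ≤ 2 * m := by exact_mod_cast hm
  have hs : 2 * π * I / ((2 * m - 1 : ℕ) : ℂ) = 2 * (((π / (2 * m - 1) : ℝ) : ℂ) * I) := by
    push_cast [Nat.cast_sub (by omega : 1 ≤ 2 * m)]
    ring
  have ht : 2 * π * I / ((2 * m + 1 : ℕ) : ℂ) = 2 * (((π / (2 * m + 1) : ℝ) : ℂ) * I) := by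
    push_cast
    ring
  have hbound : ‖qN - (-(2 * I) / π)‖ ≤ 64 / (2 * m) := by
    rw [hq, hs, ht]
    exact norm_geom_quotient_sum_sub_le rfl (by linarith) rfl rfl
  refine ⟨by exact_mod_cast hbound, ?_⟩
  have hsmall : (64 : ℝ) / (2 * m) ≤ 1 / π := by
    rw [div_le_div_iff₀ (by linarith) pi_pos]
    linarith [pi_lt_four]
  have hnorm : ‖-(2 * I) / (π : ℂ)‖ = 2 / π := by simp [abs_of_pos pi_pos]
  have htri := norm_sub_norm_le (-(2 * I) / (π : ℂ)) qN
  rw [norm_sub_rev, hnorm] at htri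
  linarith [show 2 / π - 1 / π = 1 / π by ring]
end

section
/- Let θ ∈ (0, π), x = 2cosθ, and let (d_k) be complex numbers. Define q_0 = 0, q_1 = 1, q_{k+1} = (x + d_k)q_k − q_{k−1}, and U_0 = 0, U_1 = 1, U_{k+1} = xU_k − U_{k−1}. If there exist ε > 0 and m ∈ ℕ with Σ_{j=1}^{m−1} |d_j q_j| ≤ ε sinθ, then |q_n − U_n| ≤ ε for all 1 ≤ n ≤ m. -/
/-!
Write `q = U + p`. The error `p` solves the Chebyshev recurrence `p (k+2) = x p (k+1) - p k`
forced by `d (k+1) q (k+1)`, with zero initial data, so variation of constants gives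
`q n - U n = ∑_{1 ≤ j < n} d j q j U (n - j)`. Since `U k sin θ = sin (k θ)`, every
`|U k|` is at most `1 / sin θ`, and the triangle inequality gives the bound.
-/

open Finset Real

section ForcedRecurrence

variable {R : Type*} [CommRing R] {x : R} {U p g : ℕ → R}

/-- Variation of constants: `U` is the fundamental solution of `u (k+2) = x u (k+1) - u k`. -/
theorem eq_sum_Ico_mul_of_forced_recurrence (hU0 : U 0 = 0) (hU1 : U 1 = 1)
    (hUrec : ∀ k, U (k + 2) = x * U (k + 1) - U k)
    (hp0 : p 0 = 0) (hp1 : p 1 = 0)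
    (hprec : ∀ k, p (k + 2) = x * p (k + 1) - p k + g (k + 1)) (n : ℕ) :
    p n = ∑ j ∈ Ico 1 n, g j * U (n - j) := by
  induction n using Nat.twoStepInduction with
  | zero => simp [hp0]
  | one => simp [hp1]
  | more n ih ih' =>
    have hshift : ∀ j ∈ Ico 1 (n + 1), g j * U (n + 2 - j) =
        x * (g j * U (n + 1 - j)) - g j * U (n - j) := by
      intro j hj
      have hjn : j ≤ n := by simp only [mem_Ico] at hj; omega
      rw [show n + 2 - j = n - j + 2 by omega, show n + 1 - j = n - j + 1 by omega, hUrec]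
      ring
    have hlast : ∑ j ∈ Ico 1 (n + 1), g j * U (n - j) = ∑ j ∈ Ico 1 n, g j * U (n - j) := by
      rcases Nat.eq_zero_or_pos n with rfl | hn
      · simp
      · rw [sum_Ico_succ_top hn, Nat.sub_self, hU0, mul_zero, add_zero]
    rw [sum_Ico_succ_top (by omega), sum_congr rfl hshift, sum_sub_distrib, ← mul_sum, hlast,
      ← ih, ← ih', hprec, show n + 2 - (n + 1) = 1 by omega, hU1, mul_one]

end ForcedRecurrence

section ChebyshevRecurrence

variable {θ : ℝ} {U : ℕ → ℝ}

theorem mul_sin_eq_sin_of_chebyshev_recurrence (hU0 : U 0 = 0) (hU1 : U 1 = 1)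
    (hUrec : ∀ k, U (k + 2) = 2 * cos θ * U (k + 1) - U k) (n : ℕ) :
    U n * sin θ = sin (n * θ) := by
  induction n using Nat.twoStepInduction with
  | zero => simp [hU0]
  | one => simp [hU1]
  | more n ih ih' =>
    have hprev : sin (n * θ) = sin ((n + 1 : ℕ) * θ) * cos θ - cos ((n + 1 : ℕ) * θ) * sin θ := by
      rw [← sin_sub]; push_cast; ring_nf
    have hnext : sin ((n + 2 : ℕ) * θ) =
        sin ((n + 1 : ℕ) * θ) * cos θ + cos ((n + 1 : ℕ) * θ) * sin θ := by
      rw [← sin_add]; push_cast; ring_nf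
    rw [hnext, hUrec]
    linear_combination 2 * cos θ * ih' - ih - hprev

theorem abs_le_inv_sin_of_chebyshev_recurrence (hsin : 0 < sin θ) (hU0 : U 0 = 0)
    (hU1 : U 1 = 1) (hUrec : ∀ k, U (k + 2) = 2 * cos θ * U (k + 1) - U k) (n : ℕ) :
    |U n| ≤ (sin θ)⁻¹ := by
  rw [← one_div, le_div_iff₀ hsin, ← abs_of_pos hsin, ← abs_mul,
    mul_sin_eq_sin_of_chebyshev_recurrence hU0 hU1 hUrec]
  exact abs_sin_le_one _

end ChebyshevRecurrence

theorem stmt_16_general (θ : ℝ) (hθ : θ ∈ Set.Ioo 0 Real.pi)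
    (x : ℝ) (hx : x = 2 * Real.cos θ)
    (d : ℕ → ℂ) (q : ℕ → ℂ) (U : ℕ → ℝ)
    (hq0 : q 0 = 0) (hq1 : q 1 = 1)
    (hqrec : ∀ k, q (k + 2) = ((x : ℂ) + d (k + 1)) * q (k + 1) - q k)
    (hU0 : U 0 = 0) (hU1 : U 1 = 1)
    (hUrec : ∀ k, U (k + 2) = x * U (k + 1) - U k)
    (ε : ℝ) (m : ℕ)
    (hsum : ∑ j ∈ Finset.Icc 1 (m - 1), ‖d j * q j‖ ≤ ε * Real.sin θ) :
    ∀ n, 1 ≤ n → n ≤ m → ‖q n - (U n : ℂ)‖ ≤ ε := by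
  intro n _ hnm
  subst hx
  have hsin : 0 < sin θ := sin_pos_of_pos_of_lt_pi hθ.1 hθ.2
  have hUbound (k : ℕ) : ‖(U k : ℂ)‖ ≤ (sin θ)⁻¹ := by
    rw [Complex.norm_real, norm_eq_abs]
    exact abs_le_inv_sin_of_chebyshev_recurrence hsin hU0 hU1 hUrec k
  have hduhamel := eq_sum_Ico_mul_of_forced_recurrence (x := ((2 * cos θ : ℝ) : ℂ))
    (U := fun k => (U k : ℂ)) (p := fun k => q k - U k) (g := fun j => d j * q j)
    (by simp [hU0]) (by simp [hU1]) (fun k => by simp only [hUrec]; push_cast; ring)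
    (by simp [hq0, hU0]) (by simp [hq1, hU1])
    (fun k => by simp only [hqrec, hUrec]; push_cast; ring) n
  rw [hduhamel]
  calc ‖∑ j ∈ Ico 1 n, d j * q j * (U (n - j) : ℂ)‖
      ≤ ∑ j ∈ Ico 1 n, ‖d j * q j‖ * (sin θ)⁻¹ :=
        norm_sum_le_of_le _ fun j _ => by
          rw [norm_mul]; exact mul_le_mul_of_nonneg_left (hUbound _) (norm_nonneg _)
    _ ≤ (∑ j ∈ Icc 1 (m - 1), ‖d j * q j‖) * (sin θ)⁻¹ := by
        rw [← sum_mul]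
        refine mul_le_mul_of_nonneg_right (sum_le_sum_of_subset_of_nonneg ?_ ?_) (by positivity)
        · intro j hj
          simp only [mem_Ico, mem_Icc] at hj ⊢
          omega
        · exact fun _ _ _ => norm_nonneg _
    _ ≤ ε * sin θ * (sin θ)⁻¹ := by gcongr
    _ = ε := by field_simp

theorem stmt_16 (θ : ℝ) (hθ : θ ∈ Set.Ioo 0 Real.pi)
    (x : ℝ) (hx : x = 2 * Real.cos θ)
    (d : ℕ → ℂ) (q : ℕ → ℂ) (U : ℕ → ℝ)
    (hq0 : q 0 = 0) (hq1 : q 1 = 1)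
    (hqrec : ∀ k, q (k + 2) = ((x : ℂ) + d (k + 1)) * q (k + 1) - q k)
    (hU0 : U 0 = 0) (hU1 : U 1 = 1)
    (hUrec : ∀ k, U (k + 2) = x * U (k + 1) - U k)
    (ε : ℝ) (hε : 0 < ε) (m : ℕ)
    (hsum : ∑ j ∈ Finset.Icc 1 (m - 1), ‖d j * q j‖ ≤ ε * Real.sin θ) :
    ∀ n, 1 ≤ n → n ≤ m → ‖q n - (U n : ℂ)‖ ≤ ε :=
  stmt_16_general θ hθ x hx d q U hq0 hq1 hqrec hU0 hU1 hUrec ε m hsum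
end

section
/- Let θ ∈ (0, π), x = 2cosθ, and let (d_k) be real numbers. Define q_0 = 0, q_1 = 1, q_{k+1} = (x + d_k)q_k − q_{k−1}, and U_k as the Chebyshev sequence U_{k+1} = xU_k − U_{k−1}, U_0 = 0, U_1 = 1. Then for all n ≥ 1, sinθ · (q_n − U_n) = −Im(δ_n e^{−inθ}), where δ_n = Σ_{j=1}^{n−1} d_j q_j e^{ijθ}. -/
private lemma im_mul_exp (z : ℂ) (t : ℝ) :
    (z * Complex.exp (Complex.I * t)).im = z.re * Real.sin t + z.im * Real.cos t := by
  rw [show Complex.I * (t : ℂ) = (t : ℂ) * Complex.I by ring, Complex.exp_mul_I]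
  simp [Complex.mul_im, Complex.add_im, Complex.add_re, Complex.mul_re,
    Complex.cos_ofReal_re, Complex.cos_ofReal_im, Complex.sin_ofReal_re,
    Complex.sin_ofReal_im, Complex.I_re, Complex.I_im]

theorem stmt_17 (θ : ℝ) (hθ : θ ∈ Set.Ioo 0 Real.pi)
    (x : ℝ) (hx : x = 2 * Real.cos θ)
    (d : ℕ → ℝ) (q : ℕ → ℝ) (U : ℕ → ℝ)
    (hq0 : q 0 = 0) (hq1 : q 1 = 1)
    (hqrec : ∀ k, q (k + 2) = (x + d (k + 1)) * q (k + 1) - q k)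
    (hU0 : U 0 = 0) (hU1 : U 1 = 1)
    (hUrec : ∀ k, U (k + 2) = x * U (k + 1) - U k) :
    ∀ n, 1 ≤ n →
      Real.sin θ * (q n - U n) =
        -(((∑ j ∈ Finset.Icc 1 (n - 1), (d j * q j : ℂ) * Complex.exp (Complex.I * j * θ)) *
            Complex.exp (-(Complex.I * n * θ))).im) := by
  set S : ℕ → ℂ := fun n => ∑ j ∈ Finset.Icc 1 (n - 1),
      (d j * q j : ℂ) * Complex.exp (Complex.I * j * θ) with hS
  set P : ℕ → Prop := fun n =>
    Real.sin θ * (q n - U n) = -((S n * Complex.exp (-(Complex.I * n * θ))).im) with hP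
  have hSsucc : ∀ m : ℕ, S (m + 2) = S (m + 1) +
      (d (m + 1) * q (m + 1) : ℂ) * Complex.exp (Complex.I * ((m + 1 : ℕ) : ℂ) * θ) := by
    intro m
    simp only [hS]
    rw [show m + 2 - 1 = m + 1 by omega, show m + 1 - 1 = m by omega,
      Finset.sum_Icc_succ_top (by omega : 1 ≤ m + 1)]
  have key : ∀ n : ℕ, P (n + 1) ∧ P (n + 2) := by
    intro n
    induction n with
    | zero =>
      constructor
      · show Real.sin θ * (q 1 - U 1) = _
        simp [hS, hq1, hU1, Finset.Icc_eq_empty (by norm_num : ¬(1:ℕ) ≤ 0)]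
      · show Real.sin θ * (q 2 - U 2) = _
        have hq2 : q 2 = x + d 1 := by have := hqrec 0; rw [hq0, hq1] at this; linarith
        have hU2 : U 2 = x := by have := hUrec 0; rw [hU0, hU1] at this; linarith
        have hS2 : S 2 = (d 1 * q 1 : ℂ) * Complex.exp (Complex.I * ((1:ℕ) : ℂ) * θ) := by
          simp [hS]
        have e : S 2 * Complex.exp (-(Complex.I * ((2:ℕ) : ℂ) * θ)) =
            ((d 1 : ℂ)) * Complex.exp (Complex.I * ((-θ : ℝ) : ℂ)) := by
          rw [hS2, hq1, mul_assoc, ← Complex.exp_add]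
          rw [show Complex.I * ((1:ℕ) : ℂ) * θ + -(Complex.I * ((2:ℕ) : ℂ) * θ) =
            Complex.I * ((-θ : ℝ) : ℂ) by push_cast; ring]
          simp
        rw [hq2, hU2, e, im_mul_exp]
        simp [Real.sin_neg, Real.cos_neg, Complex.ofReal_re, Complex.ofReal_im]
        ring
    | succ n ih =>
      obtain ⟨ih1, ih2⟩ := ih
      refine ⟨ih2, ?_⟩
      show Real.sin θ * (q (n + 3) - U (n + 3)) =
        -((S (n + 3) * Complex.exp (-(Complex.I * ((n + 3 : ℕ) : ℂ) * θ))).im)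
      set w : ℂ := S (n + 2) * Complex.exp (-(Complex.I * ((n + 2 : ℕ) : ℂ) * θ)) with hw
      have h3 : Complex.exp (Complex.I * ((n + 2 : ℕ) : ℂ) * θ) *
          Complex.exp (-(Complex.I * ((n + 2 : ℕ) : ℂ) * θ)) = 1 := by
        rw [← Complex.exp_add, ← Complex.exp_zero]; congr 1; ring
      have e1 : S (n + 3) * Complex.exp (-(Complex.I * ((n + 3 : ℕ) : ℂ) * θ)) =
          (w + (d (n + 2) * q (n + 2) : ℂ)) * Complex.exp (Complex.I * ((-θ : ℝ) : ℂ)) := by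
        rw [show n + 3 = n + 1 + 2 by ring, hSsucc (n + 1), hw]
        have h1 : Complex.exp (-(Complex.I * ((n + 1 + 2 : ℕ) : ℂ) * θ)) =
            Complex.exp (-(Complex.I * ((n + 2 : ℕ) : ℂ) * θ)) *
              Complex.exp (Complex.I * ((-θ : ℝ) : ℂ)) := by
          rw [← Complex.exp_add]; congr 1; push_cast; ring
        rw [show ((n + 1 + 1 : ℕ) : ℂ) = ((n + 2 : ℕ) : ℂ) by push_cast; ring]
        linear_combination (S (n + 2) + (d (n + 2) * q (n + 2) : ℂ) *
            Complex.exp (Complex.I * ((n + 2 : ℕ) : ℂ) * θ)) * h1 +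
          ((d (n + 2) * q (n + 2) : ℂ) * Complex.exp (Complex.I * ((-θ : ℝ) : ℂ))) * h3
      have e2 : S (n + 1) * Complex.exp (-(Complex.I * ((n + 1 : ℕ) : ℂ) * θ)) =
          w * Complex.exp (Complex.I * ((θ : ℝ) : ℂ)) - (d (n + 1) * q (n + 1) : ℂ) := by
        rw [hw, hSsucc n]
        have h1 : Complex.exp (-(Complex.I * ((n + 2 : ℕ) : ℂ) * θ)) *
            Complex.exp (Complex.I * ((θ : ℝ) : ℂ)) =
            Complex.exp (-(Complex.I * ((n + 1 : ℕ) : ℂ) * θ)) := by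
          rw [← Complex.exp_add]; congr 1; push_cast; ring
        have h4 : Complex.exp (Complex.I * ((n + 1 : ℕ) : ℂ) * θ) *
            Complex.exp (-(Complex.I * ((n + 1 : ℕ) : ℂ) * θ)) = 1 := by
          rw [← Complex.exp_add, ← Complex.exp_zero]; congr 1; ring
        linear_combination (-(S (n + 1) + (d (n + 1) * q (n + 1) : ℂ) *
            Complex.exp (Complex.I * ((n + 1 : ℕ) : ℂ) * θ))) * h1 -
          (d (n + 1) * q (n + 1) : ℂ) * h4
      have G1 : (S (n + 3) * Complex.exp (-(Complex.I * ((n + 3 : ℕ) : ℂ) * θ))).im =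
          (w.re + d (n + 2) * q (n + 2)) * Real.sin (-θ) + w.im * Real.cos (-θ) := by
        rw [e1, im_mul_exp]
        simp [Complex.add_re, Complex.add_im]
      have G2 : Real.sin θ * (q (n + 2) - U (n + 2)) = -w.im := ih2
      have G3 : Real.sin θ * (q (n + 1) - U (n + 1)) =
          -(w.re * Real.sin θ + w.im * Real.cos θ) := by
        have := ih1
        rw [hP] at this
        rw [this, e2, Complex.sub_im, im_mul_exp]
        simp
      rw [G1, show n + 3 = n + 1 + 2 by ring, hqrec (n + 1), hUrec (n + 1), hx,
        Real.sin_neg, Real.cos_neg]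
      linear_combination (2 * Real.cos θ) * G2 - G3
  intro n hn
  obtain ⟨k, rfl⟩ := Nat.exists_eq_add_of_le hn
  rw [add_comm 1 k]
  exact (key k).1
end
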